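/- Fix n ≥ 1. There exists a randomized binary prediction algorithm A such that for every sequence y ∈ {−1,+1}^n, μ_A(y) ≤ min{ȳ, 1 − ȳ} + 1/(2√n), where ȳ = (1/n)·|{t : y_t = +1}| is the proportion of +1's in the sequence. -/
import Mathlib


open Finset

noncomputable section

/-- The real ±1 value of a Boolean bit (`true ↦ +1`, `false ↦ -1`). -/
def sgn (b : Bool) : ℝ := if b then 1 else -1

/-- The history (prefix) of the sequence `y` strictly before time `t`. -/
def pref {n : ℕ} (y : Fin n → Bool) (t : Fin n) : Fin t.1 → Bool :=
  fun s => y ⟨s.1, s.2.trans t.2⟩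

/-- Expected proportion of mistakes `μ_A(y)` of the randomized algorithm whose prediction at
round `t` is a ±1 random variable with mean `q t (pref y t) ∈ [-1,1]`. -/
def mistakes (n : ℕ) (q : (t : Fin n) → (Fin t.1 → Bool) → ℝ) (y : Fin n → Bool) : ℝ :=
  (1 / n) * ∑ t : Fin n, (1 - sgn (y t) * q t (pref y t)) / 2

/-- Expectation of `φ` under the uniform distribution on `{−1,+1}^n`
(sign sequences encoded as Boolean sequences). -/
def unifExp (n : ℕ) (φ : (Fin n → Bool) → ℝ) : ℝ :=
  (∑ y : Fin n → Bool, φ y) / 2 ^ n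

/-- `φ` is stable: flipping any single coordinate changes its value by at most `1/n`. -/
def Stable (n : ℕ) (φ : (Fin n → Bool) → ℝ) : Prop :=
  ∀ (y : Fin n → Bool) (t : Fin n),
    |φ (Function.update y t true) - φ (Function.update y t false)| ≤ 1 / n

/-- The proportion of `+1`'s in the sequence `y`. -/
def propPlus (n : ℕ) (y : Fin n → Bool) : ℝ :=
  ((Finset.univ.filter fun t => y t = true).card : ℝ) / n

/-- The random-walk potential: `phi m s = E |s + ε₁ + ⋯ + ε_m|` for i.i.d. uniform signs. -/
def phi : ℕ → ℝ → ℝ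
  | 0, s => |s|
  | (m+1), s => (phi m (s+1) + phi m (s-1)) / 2

lemma phi_lip (m : ℕ) : ∀ a b : ℝ, |phi m a - phi m b| ≤ |a - b| := by
  induction m with
  | zero =>
    intro a b
    simpa [phi] using abs_abs_sub_abs_le_abs_sub a b
  | succ m ih =>
    intro a b
    have h1 := ih (a+1) (b+1)
    have h2 := ih (a-1) (b-1)
    have e1 : a + 1 - (b+1) = a - b := by ring
    have e2 : a - 1 - (b-1) = a - b := by ring
    rw [e1] at h1; rw [e2] at h2
    simp only [phi]
    have e3 : (phi m (a+1) + phi m (a-1))/2 - (phi m (b+1) + phi m (b-1))/2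
        = ((phi m (a+1) - phi m (b+1)) + (phi m (a-1) - phi m (b-1)))/2 := by ring
    rw [e3, abs_div, abs_two]
    have := abs_add_le (phi m (a+1) - phi m (b+1)) (phi m (a-1) - phi m (b-1))
    linarith

lemma phi_le (m : ℕ) : ∀ s : ℝ, phi m s ≤ Real.sqrt (s^2 + m) := by
  induction m with
  | zero =>
    intro s
    simp only [phi, Nat.cast_zero, add_zero]
    exact (Real.sqrt_sq_eq_abs s).symm.le
  | succ m ih =>
    intro s
    have ha := ih (s+1)
    have hb := ih (s-1)
    set A : ℝ := (s+1)^2 + m with hA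
    set B : ℝ := (s-1)^2 + m with hB
    have hA0 : (0:ℝ) ≤ A := by positivity
    have hB0 : (0:ℝ) ≤ B := by positivity
    have hC0 : (0:ℝ) ≤ s^2 + (m+1 : ℝ) := by positivity
    have hsq : (Real.sqrt A + Real.sqrt B)^2 ≤ 4*(s^2 + (m+1:ℝ)) := by
      nlinarith [Real.sq_sqrt hA0, Real.sq_sqrt hB0,
        sq_nonneg (Real.sqrt A - Real.sqrt B), Real.sqrt_nonneg A, Real.sqrt_nonneg B]
    have key : Real.sqrt A + Real.sqrt B ≤ 2 * Real.sqrt (s^2 + (m+1:ℝ)) := by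
      calc Real.sqrt A + Real.sqrt B
          = Real.sqrt ((Real.sqrt A + Real.sqrt B)^2) :=
            (Real.sqrt_sq (by positivity)).symm
        _ ≤ Real.sqrt (4*(s^2 + (m+1:ℝ))) := Real.sqrt_le_sqrt hsq
        _ = 2 * Real.sqrt (s^2 + (m+1:ℝ)) := by
            rw [show (4:ℝ)*(s^2 + (m+1:ℝ)) = 2^2*(s^2 + (m+1:ℝ)) by ring,
              Real.sqrt_mul (by positivity), Real.sqrt_sq (by norm_num)]
    simp only [phi]
    push_cast
    linarith

theorem imbalanced_prediction (n : ℕ) (hn : 1 ≤ n) :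
    ∃ q : (t : Fin n) → (Fin t.1 → Bool) → ℝ,
      (∀ (t : Fin n) (h : Fin t.1 → Bool), |q t h| ≤ 1) ∧
      ∀ y : Fin n → Bool,
        mistakes n q y ≤ min (propPlus n y) (1 - propPlus n y) + 1 / (2 * Real.sqrt n) := by
  have hn0 : (0:ℝ) < n := by exact_mod_cast hn
  have hn0' : (n:ℝ) ≠ 0 := ne_of_gt hn0
  have hs0 : (0:ℝ) < Real.sqrt n := Real.sqrt_pos.mpr hn0
  set q : (t : Fin n) → (Fin t.1 → Bool) → ℝ := fun t h =>
    (phi (n - (t.1+1)) ((∑ s, sgn (h s)) + 1)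
      - phi (n - (t.1+1)) ((∑ s, sgn (h s)) - 1)) / 2 with hq
  refine ⟨q, ?_, ?_⟩
  · intro t h
    set x : ℝ := ∑ s, sgn (h s)
    have hl := phi_lip (n - (t.1+1)) (x+1) (x-1)
    have e : |(x+1) - (x-1)| = 2 := by
      rw [show (x+1) - (x-1) = 2 by ring]; norm_num
    rw [e] at hl
    have : |q t h| = |phi (n - (t.1+1)) (x+1) - phi (n - (t.1+1)) (x-1)| / 2 := by
      rw [hq]; simp only []
      rw [abs_div, abs_two]
    rw [this]; linarith
  · intro y
    set Y : ℕ → ℝ := fun i => if h : i < n then sgn (y ⟨i, h⟩) else 0 with hYdef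
    set F : ℕ → ℝ := fun k => phi (n - k) (∑ i ∈ Finset.range k, Y i) with hF
    have hYt : ∀ t : Fin n, Y t.1 = sgn (y t) := by
      intro t
      simp only [hYdef]
      rw [dif_pos t.2]
    have hpref : ∀ t : Fin n,
        (∑ s : Fin t.1, sgn (pref y t s)) = ∑ i ∈ Finset.range t.1, Y i := by
      intro t
      rw [← Fin.sum_univ_eq_sum_range Y t.1]
      refine Finset.sum_congr rfl fun s _ => ?_
      simp only [hYdef, pref]
      rw [dif_pos (s.2.trans t.2)]
    have hterm : ∀ t : Fin n,
        sgn (y t) * q t (pref y t) = F (t.1+1) - F t.1 := by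
      intro t
      have hm : n - t.1 = (n - (t.1+1)) + 1 := by omega
      simp only [hq, hF]
      rw [hpref t, Finset.sum_range_succ, hYt t, hm]
      set S : ℝ := ∑ i ∈ Finset.range t.1, Y i
      simp only [phi]
      cases hb : y t
      · simp only [sgn, Bool.false_eq_true, if_false]
        rw [← sub_eq_add_neg]
        ring
      · simp only [sgn, if_true]
        ring
    have htel : ∑ t : Fin n, sgn (y t) * q t (pref y t) = F n - F 0 := by
      rw [Finset.sum_congr rfl (fun t _ => hterm t),
        Fin.sum_univ_eq_sum_range (fun k => F (k+1) - F k) n,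
        Finset.sum_range_sub F n]
    set c : ℝ := ((Finset.univ.filter fun t => y t = true).card : ℝ) with hc
    have hSval : ∑ i ∈ Finset.range n, Y i = 2*c - n := by
      rw [← Fin.sum_univ_eq_sum_range Y n]
      have h1 : ∀ t : Fin n, Y t.1 = 2*(if y t = true then (1:ℝ) else 0) - 1 := by
        intro t
        rw [hYt t]
        cases hb : y t <;> norm_num [sgn]
      rw [Finset.sum_congr rfl (fun t _ => h1 t), Finset.sum_sub_distrib,
        ← Finset.mul_sum, Finset.sum_boole, Finset.sum_const, Finset.card_univ,
        Fintype.card_fin, nsmul_eq_mul, mul_one]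
    have hFn : F n = |2*c - (n:ℝ)| := by
      simp only [hF, Nat.sub_self, hSval, phi]
    have hF0 : F 0 = phi n 0 := by
      simp only [hF, Nat.sub_zero, Finset.range_zero, Finset.sum_empty]
    have hphin : phi n 0 ≤ Real.sqrt n := by
      have := phi_le n 0
      simpa using this
    have hmin : min (propPlus n y) (1 - propPlus n y) = ((n:ℝ) - |2*c - n|)/(2*n) := by
      have hpp : propPlus n y = c / n := rfl
      rw [hpp]
      rcases le_total (2*c) (n:ℝ) with h | h
      · rw [abs_of_nonpos (by linarith), min_eq_left ?_]
        · rw [div_eq_div_iff hn0' (by positivity : (2:ℝ)*(n:ℝ) ≠ 0)]; ring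
        · rw [div_le_iff₀ hn0, sub_mul, one_mul, div_mul_cancel₀ _ hn0']
          linarith
      · rw [abs_of_nonneg (by linarith), min_eq_right ?_]
        · field_simp
          ring
        · rw [le_div_iff₀ hn0, sub_mul, one_mul, div_mul_cancel₀ _ hn0']
          linarith
    set X : ℝ := ∑ t : Fin n, sgn (y t) * q t (pref y t) with hX
    have hmis : mistakes n q y = ((n:ℝ) - X)/(2*n) := by
      rw [mistakes]
      rw [show ∑ t : Fin n, (1 - sgn (y t) * q t (pref y t))/2 = ((n:ℝ) - X)/2 by
        rw [← Finset.sum_div, Finset.sum_sub_distrib, Finset.sum_const, Finset.card_univ,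
          Fintype.card_fin, nsmul_eq_mul, mul_one, hX]]
      ring
    have hXval : X = |2*c - (n:ℝ)| - phi n 0 := by
      rw [htel, hFn, hF0]
    have hsqrteq : 1/(2*Real.sqrt n) = Real.sqrt n/(2*n) := by
      rw [div_eq_div_iff (by positivity : (2:ℝ)*Real.sqrt n ≠ 0) (by positivity : (2:ℝ)*(n:ℝ) ≠ 0)]
      nlinarith [Real.mul_self_sqrt hn0.le]
    rw [hmis, hmin, hsqrteq]
    rw [show ((n:ℝ) - |2*c - n|)/(2*n) + Real.sqrt n/(2*n)
        = ((n:ℝ) - |2*c - n| + Real.sqrt n)/(2*n) by ring]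
    apply div_le_div_of_nonneg_right ?_ (by positivity)
    · linarith [hXval, hphin]
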